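/- arXiv:1908.04642 — 3 statements merged into one kernel-verified Lean document; each statement's English description precedes it below -/
import Mathlib

section
/- Let (X, R, C, F) be a CRS with food set and set Y_0 = Φ_{X_F}(∅). Then Φ_{Y_0}(Y_0) ⊆ Y_0; consequently the discrete dynamics with initial condition Y_0 = Φ_{X_F}(∅) is eventually constant, i.e. has a fixed point Φ_{X_F}(∅)*. -/
open Set

universe u

/-- Domain of a reaction: chemicals consumed. -/
def rDom {X : Type u} (r : X → ℤ) : Set X := {x | r x < 0}

/-- Range of a reaction: chemicals produced. -/
def rRan {X : Type u} (r : X → ℤ) : Set X := {x | 0 < r x}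

/-- Function of a reaction: `φ_r(Y) = ran(r)` if `dom(r) ⊆ Y`, else `∅`. -/
def phiRxn {X : Type u} (r : X → ℤ) : Set X → Set X :=
  fun Y => {x | rDom r ⊆ Y ∧ x ∈ rRan r}

/-- Sum of two maps on the power set: `(φ + ψ)(Y) = φ(Y) ∪ ψ(Y)`. -/
def mapAdd {X : Type u} (φ ψ : Set X → Set X) : Set X → Set X := fun Y => φ Y ∪ ψ Y

/-- The zero map `Y ↦ ∅`. -/
def mapZero {X : Type u} : Set X → Set X := fun _ => (∅ : Set X)

/-- Partial order: `φ ≤ ψ` iff `φ(Y) ⊆ ψ(Y)` for all `Y`. -/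
def mapLE {X : Type u} (φ ψ : Set X → Set X) : Prop := ∀ Y : Set X, φ Y ⊆ ψ Y

/-- Monotone map on the power set. -/
def MonotoneMap {X : Type u} (φ : Set X → Set X) : Prop :=
  ∀ ⦃Z Y : Set X⦄, Z ⊆ Y → φ Z ⊆ φ Y

/-- A chemical reaction system on the set of chemicals `X`: a finite set of reactions
`R` and a set `C ⊆ X × R` of catalyzed reactions. -/
structure CRS (X : Type u) where
  R : Set (X → ℤ)
  hR : R.Finite
  C : Set (X × (X → ℤ))
  hC : ∀ p ∈ C, p.2 ∈ R

/-- Function of a chemical: `φ_x = Σ_{(x,r) ∈ C} φ_r`. -/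
def phiChem {X : Type u} (𝒞 : CRS X) (x : X) : Set X → Set X :=
  fun Y => {y | ∃ r, (x, r) ∈ 𝒞.C ∧ y ∈ phiRxn r Y}

/-- The smallest set of maps containing the generators `G` and the zero map and
closed under composition and sum. -/
inductive InClosure {X : Type u} (G : Set (Set X → Set X)) : (Set X → Set X) → Prop
  | gen {φ} : φ ∈ G → InClosure G φ
  | zero : InClosure G mapZero
  | comp {φ ψ} : InClosure G φ → InClosure G ψ → InClosure G (φ ∘ ψ)
  | add {φ ψ} : InClosure G φ → InClosure G ψ → InClosure G (mapAdd φ ψ)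

/-- The semigroup model `S(Y)` generated by the functions of the chemicals of `Y`.
The full semigroup model `S` is `SgModel 𝒞 Set.univ`. -/
def SgModel {X : Type u} (𝒞 : CRS X) (Y : Set X) : Set (Set X → Set X) :=
  {φ | InClosure {ψ | ∃ x ∈ Y, ψ = phiChem 𝒞 x} φ}

/-- The function `Φ_Y` of a subset `Y`, the sum (pointwise union) of all elements
of `S(Y)`. -/
def PhiSub {X : Type u} (𝒞 : CRS X) (Y : Set X) : Set X → Set X :=
  fun W => {y | ∃ φ ∈ SgModel 𝒞 Y, y ∈ φ W}

/-- The closure `F̄` of a food set: the smallest set containing `F` such that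
`ran(r) ⊆ F̄` for every reaction `r ∈ R` with `dom(r) ⊆ F` catalyzed by some
chemical of `F`. -/
def foodClosure {X : Type u} (𝒞 : CRS X) (F : Set X) : Set X :=
  ⋂₀ {G | F ⊆ G ∧ ∀ r ∈ 𝒞.R, rDom r ⊆ F → (∃ x ∈ F, (x, r) ∈ 𝒞.C) → rRan r ⊆ G}

/-- `X_F = X \ F̄`. -/
def XF {X : Type u} (𝒞 : CRS X) (F : Set X) : Set X := (foodClosure 𝒞 F)ᶜ

/-- The `F`-modification of a map:
`φ_F(Z) = (φ(Z ∪ F̄) ∪ Φ_{F̄}(Z ∪ F̄)) ∩ X_F`. -/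
def Fmod {X : Type u} (𝒞 : CRS X) (F : Set X) (φ : Set X → Set X) : Set X → Set X :=
  fun Z =>
    (φ (Z ∪ foodClosure 𝒞 F) ∪ PhiSub 𝒞 (foodClosure 𝒞 F) (Z ∪ foodClosure 𝒞 F)) ∩ XF 𝒞 F

/-- `S_F(Y)`: the smallest set of maps containing `{(φ_x)_F : x ∈ Y}` and the zero map,
closed under composition and sum. -/
def SgModelF {X : Type u} (𝒞 : CRS X) (F : Set X) (Y : Set X) : Set (Set X → Set X) :=
  {φ | InClosure {ψ | ∃ x ∈ Y, ψ = Fmod 𝒞 F (phiChem 𝒞 x)} φ}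

/-- The function `Φ_Y` of `Y ⊆ X_F` in the semigroup model with food set. -/
def PhiSubF {X : Type u} (𝒞 : CRS X) (F : Set X) (Y : Set X) : Set X → Set X :=
  fun W => {y | ∃ φ ∈ SgModelF 𝒞 F Y, y ∈ φ W}

/-- The semigroup model with food set `S_F`, generated by the `F`-modifications of all
elements of `S`. -/
def SgF {X : Type u} (𝒞 : CRS X) (F : Set X) : Set (Set X → Set X) :=
  {φ | InClosure {ψ | ∃ φ' ∈ SgModel 𝒞 Set.univ, ψ = Fmod 𝒞 F φ'} φ}

/-- The discrete dynamics: `Y_{n+1} = Φ_{Y_n}(Y_n)`. -/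
def dyn {X : Type u} (𝒞 : CRS X) (F : Set X) (Y0 : Set X) : ℕ → Set X
  | 0 => Y0
  | n + 1 => PhiSubF 𝒞 F (dyn 𝒞 F Y0 n) (dyn 𝒞 F Y0 n)

/-- `(S_F, ∘)` is nilpotent: some `N` such that every composition of `N` elements of
`S_F` is the zero map. -/
def NilpotentF {X : Type u} (𝒞 : CRS X) (F : Set X) : Prop :=
  ∃ N : ℕ, ∀ l : List (Set X → Set X),
    l.length = N → (∀ φ ∈ l, φ ∈ SgF 𝒞 F) → l.foldr (· ∘ ·) id = mapZero

/-- `x` is generated from `W` (conditions (F1) and (F2)); if `withCat = true`, in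
addition every reaction used is catalyzed by some chemical. -/
def GenFrom {X : Type u} (𝒞 : CRS X) (W : Set X) (withCat : Bool) (x : X) : Prop :=
  ∃ (J : Finset ℕ) (ri : ℕ → X → ℤ) (μ : ℕ → ℕ) (n : ℕ) (P : ℕ → Finset ℕ),
    (∀ i ∈ J, ri i ∈ 𝒞.R) ∧
    (∀ i ∈ J, 0 < μ i) ∧
    x ∈ rRan (fun y => ∑ i ∈ J, (μ i : ℤ) * ri i y) ∧
    rDom (fun y => ∑ i ∈ J, (μ i : ℤ) * ri i y) ⊆ W ∧
    0 < n ∧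
    (∀ j k, j < n → k < n → j ≠ k → Disjoint (P j) (P k)) ∧
    J = (Finset.range n).biUnion P ∧
    rDom (fun y => ∑ i ∈ P 0, (μ i : ℤ) * ri i y) ⊆ W ∧
    (∀ j, j + 1 < n →
      rDom (fun y => ∑ i ∈ P (j + 1), (μ i : ℤ) * ri i y) ⊆
        {y | ∃ k ≤ j, y ∈ rRan (fun z => ∑ i ∈ P k, (μ i : ℤ) * ri i z)}) ∧
    (withCat = true → ∀ i ∈ J, ∃ c : X, (c, ri i) ∈ 𝒞.C)

/-- A CRS with food set `F` is RAF: `(X,R,C)` is generated from `F̄`, and every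
`x ∈ X_F` is generated from `F̄` using only catalyzed reactions. -/
def IsRAF {X : Type u} (𝒞 : CRS X) (F : Set X) : Prop :=
  (∀ x : X, GenFrom 𝒞 (foodClosure 𝒞 F) false x) ∧
  (∀ x ∈ XF 𝒞 F, GenFrom 𝒞 (foodClosure 𝒞 F) true x)

/-- Restriction of a reaction to a subset of chemicals. -/
def restRxn {X : Type u} (X' : Set X) (r : X → ℤ) : X' → ℤ := fun y => r y

/-- `R|_{X'}`. -/
def restR {X : Type u} (𝒞 : CRS X) (X' : Set X) : Set (X' → ℤ) :=
  {r' | ∃ r ∈ 𝒞.R, rDom r ⊆ X' ∧ (rRan r ∩ X').Nonempty ∧ r' = restRxn X' r}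

/-- `C|_{X'}`. -/
def restC {X : Type u} (𝒞 : CRS X) (X' : Set X) : Set (X' × (X' → ℤ)) :=
  {p | ∃ r, ((p.1 : X), r) ∈ 𝒞.C ∧ restRxn X' r ∈ restR 𝒞 X' ∧ p.2 = restRxn X' r}

/-- The subnetwork `(X', R|_{X'}, C|_{X'})`. -/
def restCRS {X : Type u} (𝒞 : CRS X) (X' : Set X) : CRS X' where
  R := restR 𝒞 X'
  hR := (𝒞.hR.image (restRxn X')).subset (by
    rintro r' ⟨r, hr, -, -, rfl⟩
    exact ⟨r, hr, rfl⟩)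
  C := restC 𝒞 X'
  hC := by
    rintro p ⟨r, -, hmem, hp⟩
    rw [hp]
    exact hmem

/-- `X' ⊆ X` is a RAF subset of `(X,R,C,F)`. -/
def IsRAFSubset {X : Type u} (𝒞 : CRS X) (F : Set X) (X' : Set X) : Prop :=
  IsRAF (restCRS 𝒞 X') {y : X' | (y : X) ∈ F} ∧
  foodClosure 𝒞 F ⊆ X' ∧
  (∀ r ∈ 𝒞.R, rDom r ⊆ X' → (rRan r ∩ X').Nonempty → rRan r ⊆ X')

/-
Every map in `S_F(Y)` is monotone, and `S_F(Y)` is closed under sums and composition. As `X` is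
finite, `Φ_Y(W)` is the value at `W` of a single finite sum `ψ ∈ S_F(Y)`; then for `φ ∈ S_F(Y)`,
`φ(Φ_Y(W)) ⊆ (φ ∘ ψ)(W) ⊆ Φ_Y(W)`. With `Y = X_F`, `W = ∅` and `Y₀ = Φ_{X_F}(∅) ⊆ X_F` this gives
`Φ_{Y₀}(Y₀) ⊆ Φ_{X_F}(Y₀) ⊆ Y₀`. Since `Φ_Y(W)` is monotone in both `Y` and `W`, the dynamics is
then a decreasing sequence of subsets of a finite set, hence eventually constant.
-/

namespace InClosure

variable {X : Type u} {G : Set (Set X → Set X)}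

theorem monotoneMap (hG : ∀ φ ∈ G, MonotoneMap φ) {φ : Set X → Set X} (h : InClosure G φ) :
    MonotoneMap φ := by
  induction h with
  | gen hφ => exact hG _ hφ
  | zero => exact fun _ _ _ => subset_rfl
  | comp _ _ ih₁ ih₂ => exact fun _ _ hZY => ih₁ (ih₂ hZY)
  | add _ _ ih₁ ih₂ => exact fun _ _ hZY => union_subset_union (ih₁ hZY) (ih₂ hZY)

theorem mono {G' : Set (Set X → Set X)} (hGG' : G ⊆ G') {φ : Set X → Set X}
    (h : InClosure G φ) : InClosure G' φ := by
  induction h with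
  | gen hφ => exact gen (hGG' hφ)
  | zero => exact zero
  | comp _ _ ih₁ ih₂ => exact comp ih₁ ih₂
  | add _ _ ih₁ ih₂ => exact add ih₁ ih₂

theorem exists_superset_of_finite {W T : Set X} (hT : T.Finite)
    (h : T ⊆ {y | ∃ φ, InClosure G φ ∧ y ∈ φ W}) : ∃ ψ, InClosure G ψ ∧ T ⊆ ψ W := by
  induction T, hT using Set.Finite.induction_on with
  | empty => exact ⟨mapZero, zero, empty_subset _⟩
  | @insert a T _ _ ih =>
    obtain ⟨ψ, hψ, hTψ⟩ := ih ((subset_insert a T).trans h)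
    obtain ⟨χ, hχ, haχ⟩ := h (mem_insert a T)
    refine ⟨mapAdd χ ψ, add hχ hψ, insert_subset (Or.inl haχ) ?_⟩
    exact hTψ.trans subset_union_right

end InClosure

section FoodSetModel

variable {X : Type u} (𝒞 : CRS X) (F : Set X)

theorem phiChem_monotoneMap (x : X) : MonotoneMap (phiChem 𝒞 x) :=
  fun _ _ hZY _ ⟨r, hr, hdom, hran⟩ => ⟨r, hr, hdom.trans hZY, hran⟩

theorem monotoneMap_of_mem_sgModel {Y : Set X} {φ : Set X → Set X} (h : φ ∈ SgModel 𝒞 Y) :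
    MonotoneMap φ :=
  InClosure.monotoneMap (by rintro _ ⟨x, -, rfl⟩; exact phiChem_monotoneMap 𝒞 x) h

theorem phiSub_monotoneMap (Y : Set X) : MonotoneMap (PhiSub 𝒞 Y) :=
  fun _ _ hZW _ ⟨φ, hφ, hy⟩ => ⟨φ, hφ, monotoneMap_of_mem_sgModel 𝒞 hφ hZW hy⟩

theorem fmod_monotoneMap {φ : Set X → Set X} (hφ : MonotoneMap φ) :
    MonotoneMap (Fmod 𝒞 F φ) := fun _ _ hZY =>
  have hZY' := union_subset_union_left (foodClosure 𝒞 F) hZY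
  inter_subset_inter_left _ (union_subset_union (hφ hZY') (phiSub_monotoneMap 𝒞 _ hZY'))

theorem monotoneMap_of_mem_sgModelF {Y : Set X} {φ : Set X → Set X}
    (h : φ ∈ SgModelF 𝒞 F Y) : MonotoneMap φ :=
  InClosure.monotoneMap
    (by rintro _ ⟨x, -, rfl⟩; exact fmod_monotoneMap 𝒞 F (phiChem_monotoneMap 𝒞 x)) h

theorem sgModelF_mono {Y Y' : Set X} (hYY' : Y ⊆ Y') : SgModelF 𝒞 F Y ⊆ SgModelF 𝒞 F Y' :=
  fun _ => InClosure.mono (by rintro _ ⟨x, hx, rfl⟩; exact ⟨x, hYY' hx, rfl⟩)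

theorem phiSubF_subset_phiSubF {Y Y' W W' : Set X} (hYY' : Y ⊆ Y') (hWW' : W ⊆ W') :
    PhiSubF 𝒞 F Y W ⊆ PhiSubF 𝒞 F Y' W' := fun _ ⟨φ, hφ, hy⟩ =>
  ⟨φ, sgModelF_mono 𝒞 F hYY' hφ, monotoneMap_of_mem_sgModelF 𝒞 F hφ hWW' hy⟩

theorem phiSubF_subset_XF (Y W : Set X) : PhiSubF 𝒞 F Y W ⊆ XF 𝒞 F := by
  rintro y ⟨φ, hφ, hy⟩
  induction hφ generalizing W with
  | gen hφ => obtain ⟨x, -, rfl⟩ := hφ; exact hy.2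
  | zero => exact absurd hy (notMem_empty y)
  | comp _ _ ih₁ _ => exact ih₁ _ hy
  | add _ _ ih₁ ih₂ => exact hy.elim (ih₁ W) (ih₂ W)

theorem phiSubF_phiSubF_subset {Y W : Set X} (hfin : (PhiSubF 𝒞 F Y W).Finite) :
    PhiSubF 𝒞 F Y (PhiSubF 𝒞 F Y W) ⊆ PhiSubF 𝒞 F Y W := by
  obtain ⟨ψ, hψ, hΦψ⟩ := InClosure.exists_superset_of_finite hfin subset_rfl
  rintro y ⟨φ, hφ, hy⟩
  exact ⟨φ ∘ ψ, InClosure.comp hφ hψ, monotoneMap_of_mem_sgModelF 𝒞 F hφ hΦψ hy⟩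

theorem dyn_antitone {Y₀ : Set X} (h : PhiSubF 𝒞 F Y₀ Y₀ ⊆ Y₀) : Antitone (dyn 𝒞 F Y₀) := by
  refine antitone_nat_of_succ_le fun n => ?_
  induction n with
  | zero => exact h
  | succ n ih => exact phiSubF_subset_phiSubF 𝒞 F ih ih

theorem dyn_eventually_const [Finite X] {Y₀ : Set X} (h : PhiSubF 𝒞 F Y₀ Y₀ ⊆ Y₀) :
    ∃ N, ∀ n ≥ N, dyn 𝒞 F Y₀ n = dyn 𝒞 F Y₀ N := by
  obtain ⟨N, hN⟩ := WellFoundedLT.antitone_chain_condition (dyn_antitone 𝒞 F h)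
  exact ⟨N, fun n hn => (hN n hn).symm⟩

end FoodSetModel

/-- with `Y₀ = Φ_{X_F}(∅)` one has `Φ_{Y₀}(Y₀) ⊆ Y₀`; consequently the
discrete dynamics with initial condition `Y₀` is eventually constant. -/
theorem dynamics_from_PhiXF_empty_stabilizes {X : Type u} [Finite X]
    (𝒞 : CRS X) (F : Set X) :
    PhiSubF 𝒞 F (PhiSubF 𝒞 F (XF 𝒞 F) ∅) (PhiSubF 𝒞 F (XF 𝒞 F) ∅) ⊆
      PhiSubF 𝒞 F (XF 𝒞 F) ∅ ∧
    ∃ N : ℕ, ∀ n ≥ N,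
      dyn 𝒞 F (PhiSubF 𝒞 F (XF 𝒞 F) ∅) n = dyn 𝒞 F (PhiSubF 𝒞 F (XF 𝒞 F) ∅) N := by
  have hY₀ : PhiSubF 𝒞 F (PhiSubF 𝒞 F (XF 𝒞 F) ∅) (PhiSubF 𝒞 F (XF 𝒞 F) ∅) ⊆
      PhiSubF 𝒞 F (XF 𝒞 F) ∅ :=
    (phiSubF_subset_phiSubF 𝒞 F (phiSubF_subset_XF 𝒞 F _ _) subset_rfl).trans
      (phiSubF_phiSubF_subset 𝒞 F (toFinite _))
  exact ⟨hY₀, dyn_eventually_const 𝒞 F hY₀⟩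
end

section
/- Let (X, R, C, F) be a CRS with food set and (Y_n) its discrete dynamics. If Y_1 ⊆ Y_0, then Y_{n+1} ⊆ Y_n for all n ∈ ℕ. -/
open Set

universe u

/-! The map `Y ↦ Φ_Y(Y)` is monotone: every element of `S_F(Y)` is assembled by composition
and union from monotone maps, and `S_F(Y)` grows with `Y`. The dynamics is the orbit of `Y₀`
under this map, and a monotone map iterated from a point that it sends below itself produces a
descending sequence. -/

lemma InClosure.monotone {X : Type u} {G : Set (Set X → Set X)} (hG : ∀ φ ∈ G, Monotone φ)
    {φ : Set X → Set X} (h : InClosure G φ) : Monotone φ := by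
  induction h with
  | gen hφ => exact hG _ hφ
  | zero => exact monotone_const
  | comp _ _ ihφ ihψ => exact ihφ.comp ihψ
  | add _ _ ihφ ihψ => exact ihφ.sup ihψ

lemma InClosure.mono_s11 {X : Type u} {G G' : Set (Set X → Set X)} (hGG' : G ⊆ G')
    {φ : Set X → Set X} (h : InClosure G φ) : InClosure G' φ := by
  induction h with
  | gen hφ => exact .gen (hGG' hφ)
  | zero => exact .zero
  | comp _ _ ihφ ihψ => exact .comp ihφ ihψ
  | add _ _ ihφ ihψ => exact .add ihφ ihψ

section

variable {X : Type u} (𝒞 : CRS X) (F : Set X)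

lemma monotone_phiChem (x : X) : Monotone (phiChem 𝒞 x) :=
  fun _ _ hZY _ ⟨r, hr, hdom, hran⟩ ↦ ⟨r, hr, hdom.trans hZY, hran⟩

lemma monotone_of_mem_SgModel {Y : Set X} {φ : Set X → Set X} (h : φ ∈ SgModel 𝒞 Y) :
    Monotone φ :=
  InClosure.monotone (by rintro _ ⟨x, -, rfl⟩; exact monotone_phiChem 𝒞 x) h

lemma monotone_PhiSub (Y : Set X) : Monotone (PhiSub 𝒞 Y) :=
  fun _ _ hZW _ ⟨φ, hφ, hy⟩ ↦ ⟨φ, hφ, monotone_of_mem_SgModel 𝒞 hφ hZW hy⟩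

lemma Monotone.Fmod {φ : Set X → Set X} (hφ : Monotone φ) : Monotone (Fmod 𝒞 F φ) := by
  intro Z W hZW
  have hun : Z ∪ foodClosure 𝒞 F ⊆ W ∪ foodClosure 𝒞 F := union_subset_union_left _ hZW
  exact inter_subset_inter_left _ (union_subset_union (hφ hun) (monotone_PhiSub 𝒞 _ hun))

lemma monotone_of_mem_SgModelF {Y : Set X} {φ : Set X → Set X} (h : φ ∈ SgModelF 𝒞 F Y) :
    Monotone φ :=
  InClosure.monotone (by rintro _ ⟨x, -, rfl⟩; exact (monotone_phiChem 𝒞 x).Fmod 𝒞 F) h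

lemma SgModelF_mono {Y Y' : Set X} (hY : Y ⊆ Y') : SgModelF 𝒞 F Y ⊆ SgModelF 𝒞 F Y' :=
  fun _ ↦ InClosure.mono_s11 (by rintro _ ⟨x, hx, rfl⟩; exact ⟨x, hY hx, rfl⟩)

lemma PhiSubF_subset_PhiSubF {Y Y' W W' : Set X} (hY : Y ⊆ Y') (hW : W ⊆ W') :
    PhiSubF 𝒞 F Y W ⊆ PhiSubF 𝒞 F Y' W' :=
  fun _ ⟨φ, hφ, hy⟩ ↦ ⟨φ, SgModelF_mono 𝒞 F hY hφ, monotone_of_mem_SgModelF 𝒞 F hφ hW hy⟩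

lemma monotone_PhiSubF_self : Monotone fun Y ↦ PhiSubF 𝒞 F Y Y :=
  fun _ _ hY ↦ PhiSubF_subset_PhiSubF 𝒞 F hY hY

lemma dyn_eq_iterate (Y0 : Set X) (n : ℕ) :
    dyn 𝒞 F Y0 n = (fun Y ↦ PhiSubF 𝒞 F Y Y)^[n] Y0 := by
  induction n with
  | zero => rfl
  | succ n ih => rw [Function.iterate_succ_apply', ← ih]; rfl

end

theorem dynamics_descending_general {X : Type u} (𝒞 : CRS X) (F : Set X)
    (Y0 : Set X) (h1 : dyn 𝒞 F Y0 1 ⊆ dyn 𝒞 F Y0 0) :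
    ∀ n : ℕ, dyn 𝒞 F Y0 (n + 1) ⊆ dyn 𝒞 F Y0 n := by
  have hanti : Antitone fun n ↦ (fun Y ↦ PhiSubF 𝒞 F Y Y)^[n] Y0 :=
    (monotone_PhiSubF_self 𝒞 F).antitone_iterate_of_map_le h1
  intro n
  rw [dyn_eq_iterate, dyn_eq_iterate]
  exact hanti n.le_succ

/-- if `Y₁ ⊆ Y₀` then `Y_{n+1} ⊆ Y_n` for all `n`. -/
theorem dynamics_descending {X : Type u} [Finite X] (𝒞 : CRS X) (F : Set X)
    (Y0 : Set X) (hY0 : Y0 ⊆ XF 𝒞 F) (h1 : dyn 𝒞 F Y0 1 ⊆ dyn 𝒞 F Y0 0) :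
    ∀ n : ℕ, dyn 𝒞 F Y0 (n + 1) ⊆ dyn 𝒞 F Y0 n :=
  dynamics_descending_general 𝒞 F Y0 h1
end

section
/- For any CRS with food set (X, R, C, F), every chemical x ∈ Φ_{X_F}(∅) is generated from F̄, i.e. conditions (F1) and (F2) with W = F̄ hold for x; hence Φ_{X_F}(∅) is contained in the maximal F-generated subnetwork of the CRS. -/
open Set

universe u

/-!
Call `x` one-stage generated from `W` if some positive integer combination `s` of reactions has
`x ∈ ran s` and `dom s ⊆ W`. Then `W ∪ {one-stage generated}` is closed under reactions: if `r`
consumes chemicals `d ∉ W` produced by combinations `s_d`, then `r + Σ_d |r(d)| • s_d` consumes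
nothing outside `W` and still produces what `r` produces outside `W`. Every `F`-modified map
preserves subsets of this set and lands in `X_F`, which misses `F̄`; so each chemical of
`Φ_{X_F}(∅)` is one-stage generated from `F̄`, i.e. (F1), (F2) hold with a single block.
-/

section

variable {X : Type u}

def IsReactionClosed (𝒞 : CRS X) (A : Set X) : Prop :=
  ∀ r ∈ 𝒞.R, rDom r ⊆ A → rRan r ⊆ A

/-- Positive integer combinations of reactions are the elements of `AddSubmonoid.closure 𝒞.R`. -/
def oneStageGenerated (𝒞 : CRS X) (W : Set X) : Set X :=
  {x | ∃ s ∈ AddSubmonoid.closure 𝒞.R, x ∈ rRan s ∧ rDom s ⊆ W}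

theorem nonneg_of_rDom_subset {s : X → ℤ} {W : Set X} (hs : rDom s ⊆ W) {z : X} (hz : z ∉ W) :
    0 ≤ s z :=
  not_lt.1 fun h => hz (hs h)

theorem isReactionClosed_union_oneStageGenerated [Finite X] (𝒞 : CRS X) (W : Set X) :
    IsReactionClosed 𝒞 (W ∪ oneStageGenerated 𝒞 W) := by
  have := Fintype.ofFinite X
  intro r hr hdom y hy
  by_cases hyW : y ∈ W
  · exact Or.inl hyW
  have producer : ∀ d, ∃ s ∈ AddSubmonoid.closure 𝒞.R,
      rDom s ⊆ W ∧ (d ∈ rDom r → d ∉ W → d ∈ rRan s) := by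
    intro d
    by_cases hd : d ∈ rDom r ∧ d ∉ W
    · obtain ⟨s, hs, hds, hsW⟩ := (hdom hd.1).resolve_left hd.2
      exact ⟨s, hs, hsW, fun _ _ => hds⟩
    · exact ⟨0, zero_mem _, fun _ hz => (lt_irrefl (0 : ℤ) hz).elim, fun h1 h2 => absurd ⟨h1, h2⟩ hd⟩
  choose s hsR hsW hds using producer
  -- each consumed `d ∉ W` is replenished by `|r d|` copies of its producer `s d`
  set t : X → ℤ := ∑ d, (-r d).toNat • s d + r with ht
  have ht_apply : ∀ z, t z = ∑ d, ((-r d).toNat : ℤ) * s d z + r z := fun z => by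
    simp [ht, Finset.sum_apply]
  have hsum_nonneg : ∀ z ∉ W, 0 ≤ ∑ d, ((-r d).toNat : ℤ) * s d z := fun z hz =>
    Finset.sum_nonneg fun d _ => mul_nonneg (by positivity) (nonneg_of_rDom_subset (hsW d) hz)
  refine Or.inr ⟨t, add_mem (sum_mem fun d _ => nsmul_mem (hsR d) _)
    (AddSubmonoid.subset_closure hr), ?_, fun z hz => ?_⟩
  · have : 0 < r y := hy
    show 0 < t y
    linarith [ht_apply y, hsum_nonneg y hyW]
  · by_contra hzW
    have htz : t z < 0 := hz
    have hrz : r z < 0 := by linarith [ht_apply z, hsum_nonneg z hzW]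
    have hreplenish : -r z ≤ ∑ d, ((-r d).toNat : ℤ) * s d z :=
      calc -r z = ((-r z).toNat : ℤ) := (Int.toNat_of_nonneg (by linarith)).symm
        _ ≤ ((-r z).toNat : ℤ) * s z z := le_mul_of_one_le_right (by positivity) (hds z hrz hzW)
        _ ≤ ∑ d, ((-r d).toNat : ℤ) * s d z :=
          Finset.single_le_sum (f := fun d => ((-r d).toNat : ℤ) * s d z)
            (fun d _ => mul_nonneg (by positivity) (nonneg_of_rDom_subset (hsW d) hzW))
            (Finset.mem_univ z)
    linarith [ht_apply z]

theorem List.sum_range_getD {M : Type*} [AddCommMonoid M] (l : List M) :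
    ∑ i ∈ Finset.range l.length, l.getD i 0 = l.sum := by
  rw [Finset.sum_range, ← Fin.sum_univ_getElem]
  exact Finset.sum_congr rfl fun i _ => List.getD_eq_getElem _ _ i.isLt

theorem genFrom_of_mem_oneStageGenerated {𝒞 : CRS X} {W : Set X} {x : X}
    (hx : x ∈ oneStageGenerated 𝒞 W) : GenFrom 𝒞 W false x := by
  obtain ⟨s, hs, hxs, hsW⟩ := hx
  obtain ⟨l, hlR, rfl⟩ := AddSubmonoid.exists_list_of_mem_closure hs
  have hsum : (fun y => ∑ i ∈ Finset.range l.length, ((1 : ℕ) : ℤ) * l.getD i 0 y) = l.sum := by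
    ext y
    simp only [Nat.cast_one, one_mul]
    rw [← Finset.sum_apply y _ fun i => l.getD i 0, List.sum_range_getD]
  refine ⟨Finset.range l.length, fun i => l.getD i 0, fun _ => 1, 1, fun _ => Finset.range l.length,
    ?_, fun _ _ => one_pos, ?_, ?_, one_pos, ?_, by simp, ?_, by omega, by simp⟩
  · intro i hi
    simp only [List.getD_eq_getElem _ _ (Finset.mem_range.1 hi)]
    exact hlR _ (List.getElem_mem _)
  · rwa [hsum]
  · rwa [hsum]
  · intro j k hj hk hjk
    omega
  · rwa [hsum]

theorem InClosure.mapsTo {G : Set (Set X → Set X)} {A : Set X}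
    (hG : ∀ ψ ∈ G, MapsTo ψ (Iic A) (Iic A)) {φ : Set X → Set X} (hφ : InClosure G φ) :
    MapsTo φ (Iic A) (Iic A) := by
  induction hφ with
  | gen h => exact hG _ h
  | zero => exact fun _ _ => empty_subset A
  | comp _ _ ihφ ihψ => exact ihφ.comp ihψ
  | add _ _ ihφ ihψ => exact fun Z hZ => union_subset (ihφ hZ) (ihψ hZ)

variable {𝒞 : CRS X} {A : Set X}

theorem phiChem_mapsTo (hA : IsReactionClosed 𝒞 A) (x : X) :
    MapsTo (phiChem 𝒞 x) (Iic A) (Iic A) := by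
  rintro Z hZ y ⟨r, hxr, hrZ, hy⟩
  exact hA r (𝒞.hC _ hxr) (hrZ.trans hZ) hy

theorem PhiSub_mapsTo (hA : IsReactionClosed 𝒞 A) (Y : Set X) :
    MapsTo (PhiSub 𝒞 Y) (Iic A) (Iic A) := by
  rintro Z hZ y ⟨φ, hφ, hy⟩
  refine InClosure.mapsTo ?_ hφ hZ hy
  rintro _ ⟨x, -, rfl⟩
  exact phiChem_mapsTo hA x

theorem Fmod_mapsTo {F : Set X} (hA : IsReactionClosed 𝒞 A) (hFA : foodClosure 𝒞 F ⊆ A)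
    {φ : Set X → Set X} (hφ : MapsTo φ (Iic A) (Iic A)) :
    MapsTo (Fmod 𝒞 F φ) (Iic A) (Iic A) := fun Z hZ =>
  have hZF : Z ∪ foodClosure 𝒞 F ⊆ A := union_subset hZ hFA
  inter_subset_left.trans (union_subset (hφ hZF) (PhiSub_mapsTo hA _ hZF))

theorem mapsTo_of_mem_SgModelF {F Y : Set X} (hA : IsReactionClosed 𝒞 A)
    (hFA : foodClosure 𝒞 F ⊆ A) {φ : Set X → Set X} (hφ : φ ∈ SgModelF 𝒞 F Y) :
    MapsTo φ (Iic A) (Iic A) := by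
  refine InClosure.mapsTo ?_ hφ
  rintro _ ⟨x, -, rfl⟩
  exact Fmod_mapsTo hA hFA (phiChem_mapsTo hA x)

theorem mapsTo_XF_of_mem_SgModelF {F Y : Set X} {φ : Set X → Set X}
    (hφ : φ ∈ SgModelF 𝒞 F Y) : MapsTo φ (Iic (XF 𝒞 F)) (Iic (XF 𝒞 F)) := by
  refine InClosure.mapsTo ?_ hφ
  rintro _ ⟨x, -, rfl⟩ Z -
  exact inter_subset_right

end

/-- every chemical in `Φ_{X_F}(∅)` is generated from `F̄`
(conditions (F1),(F2) with `W = F̄`). -/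
theorem PhiXF_empty_generated_from_food {X : Type u} [Finite X]
    (𝒞 : CRS X) (F : Set X) :
    ∀ x ∈ PhiSubF 𝒞 F (XF 𝒞 F) ∅, GenFrom 𝒞 (foodClosure 𝒞 F) false x := by
  rintro x ⟨φ, hφ, hx⟩
  have hxF : x ∉ foodClosure 𝒞 F := mapsTo_XF_of_mem_SgModelF hφ (empty_subset _) hx
  have hxgen : x ∈ foodClosure 𝒞 F ∪ oneStageGenerated 𝒞 (foodClosure 𝒞 F) :=
    mapsTo_of_mem_SgModelF (isReactionClosed_union_oneStageGenerated 𝒞 _) subset_union_left hφ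
      (empty_subset _) hx
  exact genFrom_of_mem_oneStageGenerated (hxgen.resolve_left hxF)
end
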